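/- arXiv:1211.3695 — 15 statements merged into one kernel-verified Lean document; each statement's English description precedes it below -/
import Mathlib

section
/- Let G be a group and α a normalized 3-cocycle on G. Then for every a ∈ G the function β_a satisfies the twisted 2-cocycle condition: β_{x⁻¹ax}(y,z) · β_a(x, yz) = β_a(xy, z) · β_a(x, y) for all x, y, z ∈ G, and the normalization condition β_a(x, e) = β_a(e, x) = 1 for all x ∈ G. -/
def IsNormalized3Cocycle {G : Type*} [Group G] (α : G → G → G → ℂˣ) : Prop :=
  (∀ g₀ g₁ g₂ g₃ : G,
      α g₁ g₂ g₃ * (α (g₀ * g₁) g₂ g₃)⁻¹ * α g₀ (g₁ * g₂) g₃ *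
        (α g₀ g₁ (g₂ * g₃))⁻¹ * α g₀ g₁ g₂ = 1) ∧
  (∀ g h : G, α 1 g h = 1 ∧ α g 1 h = 1 ∧ α g h 1 = 1)

def betaTw {G : Type*} [Group G] (α : G → G → G → ℂˣ) (a b c : G) : ℂˣ :=
  α a b c * α b c (c⁻¹ * b⁻¹ * a * b * c) * (α b (b⁻¹ * a * b) c)⁻¹

section

variable {G : Type*} [Group G] {α : G → G → G → ℂˣ}

def Is3Cocycle (α : G → G → G → ℂˣ) : Prop :=
  ∀ g₀ g₁ g₂ g₃ : G,
    α g₁ g₂ g₃ * (α (g₀ * g₁) g₂ g₃)⁻¹ * α g₀ (g₁ * g₂) g₃ *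
      (α g₀ g₁ (g₂ * g₃))⁻¹ * α g₀ g₁ g₂ = 1

theorem IsNormalized3Cocycle.is3Cocycle (hα : IsNormalized3Cocycle α) : Is3Cocycle α :=
  hα.1

theorem Is3Cocycle.betaTw_mul (hα : Is3Cocycle α) (a x y z : G) :
    betaTw α (x⁻¹ * a * x) y z * betaTw α a x (y * z) =
      betaTw α a (x * y) z * betaTw α a x y := by
  -- The identity is the alternating product of the cocycle conditions at these four quadruples;
  -- in `Additive ℂˣ` it becomes a linear combination, checked by `abel`.
  have h₁ := hα x (x⁻¹ * a * x) y z
  have h₂ := hα x y (y⁻¹ * (x⁻¹ * a * x) * y) z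
  have h₃ := hα x y z (z⁻¹ * (y⁻¹ * (x⁻¹ * a * x) * y) * z)
  have h₄ := hα a x y z
  simp only [betaTw, mul_assoc, mul_inv_rev, mul_inv_cancel_left] at h₁ h₂ h₃ h₄ ⊢
  apply Additive.ofMul.injective
  apply_fun Additive.ofMul at h₁ h₂ h₃ h₄
  simp only [ofMul_mul, ofMul_inv, ofMul_one] at h₁ h₂ h₃ h₄ ⊢
  linear_combination (norm := abel) h₁ - h₂ + h₃ - h₄

theorem IsNormalized3Cocycle.betaTw_one_right (hα : IsNormalized3Cocycle α) (a x : G) :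
    betaTw α a x 1 = 1 := by
  simp [betaTw, (hα.2 _ _).2.1, (hα.2 _ _).2.2]

theorem IsNormalized3Cocycle.betaTw_one_left (hα : IsNormalized3Cocycle α) (a x : G) :
    betaTw α a 1 x = 1 := by
  simp [betaTw, (hα.2 _ _).1, (hα.2 _ _).2.1]

end

theorem betaTw_twisted_two_cocycle_and_normalized
    {G : Type*} [Group G] (α : G → G → G → ℂˣ)
    (hα : IsNormalized3Cocycle α) (a : G) :
    (∀ x y z : G,
      betaTw α (x⁻¹ * a * x) y z * betaTw α a x (y * z) =
        betaTw α a (x * y) z * betaTw α a x y) ∧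
    (∀ x : G, betaTw α a x 1 = 1 ∧ betaTw α a 1 x = 1) :=
  ⟨hα.is3Cocycle.betaTw_mul a, fun x => ⟨hα.betaTw_one_right a x, hα.betaTw_one_left a x⟩⟩
end

section
/- Let G be a group and α a normalized 3-cocycle on G. Fix g ∈ G and h ∈ Z_g. Then the function x ↦ ρ^g(h,x) is multiplicative on Z_{g,h}: for all x, y ∈ Z_{g,h}, ρ^g(h,x) · ρ^g(h,y) = ρ^g(h, xy). -/
/-- The phase `ρ^g(h,x) = β_g(x⁻¹, h) · β_g(h, x⁻¹)⁻¹`. -/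
def rhoTw {G : Type*} [Group G] (α : G → G → G → ℂˣ) (g h x : G) : ℂˣ :=
  betaTw α g x⁻¹ h * (betaTw α g h x⁻¹)⁻¹

/-! On the centralizer `Z_g` the cochain `β_g` reduces to `ε(b,c) = α(g,b,c) α(b,c,g) / α(b,g,c)`,
and four instances of the 3-cocycle identity show that `ε` is a 2-cocycle on `Z_g` with trivial
coefficients. For any such 2-cocycle, `x ↦ ε(x,h) / ε(h,x)` is multiplicative on the centralizer
of `h`; `ρ^g(h,x)` is this function at `x⁻¹`, and `ℂˣ` is commutative. -/

theorem twoCocycle_div_swap_mul {H M : Type*} [Group H] [CommGroup M] {ε : H → H → M}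
    (hε : ∀ a b c, ε a b * ε (a * b) c = ε a (b * c) * ε b c)
    {h x y : H} (hx : Commute x h) (hy : Commute y h) :
    ε (x * y) h / ε h (x * y) = ε x h / ε h x * (ε y h / ε h y) := by
  have e₁ := congrArg Additive.ofMul (hε x y h)
  have e₂ := congrArg Additive.ofMul (hε x h y)
  have e₃ := congrArg Additive.ofMul (hε h x y)
  rw [hy.eq] at e₁
  rw [hx.eq] at e₂
  apply Additive.ofMul.injective
  simp only [ofMul_mul, ofMul_div] at e₁ e₂ e₃ ⊢
  linear_combination (norm := abel) e₁ - e₂ + e₃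

theorem betaTw_of_commute {G : Type*} [Group G] (α : G → G → G → ℂˣ) {g b c : G}
    (hb : Commute b g) (hc : Commute c g) :
    betaTw α g b c = α g b c * α b c g * (α b g c)⁻¹ := by
  have hb' : b⁻¹ * g * b = g := by rw [mul_assoc, ← hb.eq, inv_mul_cancel_left]
  have hc' : c⁻¹ * g * c = g := by rw [mul_assoc, ← hc.eq, inv_mul_cancel_left]
  rw [betaTw, hb', show c⁻¹ * b⁻¹ * g * b * c = c⁻¹ * (b⁻¹ * g * b) * c by group, hb', hc']

theorem IsNormalized3Cocycle.betaTw_mul_betaTw_of_commute {G : Type*} [Group G]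
    {α : G → G → G → ℂˣ} (hα : IsNormalized3Cocycle α)
    {g a b c : G} (ha : Commute a g) (hb : Commute b g) (hc : Commute c g) :
    betaTw α g a b * betaTw α g (a * b) c = betaTw α g a (b * c) * betaTw α g b c := by
  rw [betaTw_of_commute α ha hb, betaTw_of_commute α (ha.mul_left hb) hc,
    betaTw_of_commute α ha (hb.mul_left hc), betaTw_of_commute α hb hc]
  have e₁ := congrArg Additive.ofMul (hα.1 g a b c)
  have e₂ := congrArg Additive.ofMul (hα.1 a g b c)
  have e₃ := congrArg Additive.ofMul (hα.1 a b g c)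
  have e₄ := congrArg Additive.ofMul (hα.1 a b c g)
  rw [← ha.eq] at e₁
  rw [← hb.eq] at e₂
  rw [← hc.eq] at e₃
  apply Additive.ofMul.injective
  simp only [ofMul_mul, ofMul_inv, ofMul_one] at e₁ e₂ e₃ e₄ ⊢
  linear_combination (norm := abel) e₁ - e₂ + e₃ - e₄

theorem rhoTw_multiplicative {G : Type*} [Group G] (α : G → G → G → ℂˣ)
    (hα : IsNormalized3Cocycle α) (g h : G) (hgh : h * g = g * h) :
    ∀ x y : G, x * g = g * x → x * h = h * x → y * g = g * y → y * h = h * y →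
      rhoTw α g h x * rhoTw α g h y = rhoTw α g h (x * y) := by
  intro x y hxg hxh hyg hyh
  let Z := Subgroup.centralizer {g}
  have mem {k : G} (hk : Commute k g) : k ∈ Z := Subgroup.mem_centralizer_singleton_iff.2 hk
  have comm (a : Z) : Commute (a : G) g := Subgroup.mem_centralizer_singleton_iff.1 a.2
  have hε (a b c : Z) : betaTw α g a b * betaTw α g (a * b) c =
      betaTw α g a (b * c) * betaTw α g b c :=
    hα.betaTw_mul_betaTw_of_commute (comm a) (comm b) (comm c)
  have hρ := twoCocycle_div_swap_mul hε (h := ⟨h, mem hgh⟩)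
    (x := ⟨y⁻¹, mem (Commute.inv_left hyg)⟩) (y := ⟨x⁻¹, mem (Commute.inv_left hxg)⟩)
    (Subtype.ext (Commute.inv_left hyh)) (Subtype.ext (Commute.inv_left hxh))
  simp only [div_eq_mul_inv] at hρ
  rw [rhoTw, rhoTw, rhoTw, mul_inv_rev]
  exact (hρ.trans (mul_comm _ _)).symm
end

section
/- Let G be a finite group and α a normalized 3-cocycle on G. Fix g ∈ G and h ∈ Z_g. Then (1/|Z_{g,h}|) · Σ_{x ∈ Z_{g,h}} ρ^g(h,x) equals 1 if h is β_g-regular, and equals 0 otherwise. -/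
/-- `h ∈ Z_g` is `β_g`-regular if `β_g(h,k) = β_g(k,h)` for all `k ∈ Z_{g,h}`. -/
def IsBetaRegular {G : Type*} [Group G] (α : G → G → G → ℂˣ) (g h : G) : Prop :=
  ∀ k : G, k * g = g * k → k * h = h * k → betaTw α g h k = betaTw α g k h

/-!
The four 3-cocycle conditions at `(a,x,y,z)`, `(x,x⁻¹ax,y,z)`, `(x,y,·,z)` and `(x,y,z,·)` multiply
to the twisted 2-cocycle identity `β_a(x,y) β_a(xy,z) = β_a(x,yz) β_{x⁻¹ax}(y,z)`. For commuting
`g` and `h`, three instances of it with `a = g` show that `x ↦ β_g(x,h)/β_g(h,x)`, and hence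
`x ↦ ρ^g(h,x)`, is a character of `Z_{g,h}`; this character is trivial exactly when `h` is
`β_g`-regular. The claim is then the orthogonality relation: the average of a character of a finite
group is `1` if the character is trivial and `0` otherwise.
-/

namespace IsNormalized3Cocycle

variable {G : Type*} [Group G] {α : G → G → G → ℂˣ}

theorem betaTw_mul_betaTw (hα : IsNormalized3Cocycle α) (a x y z : G) :
    betaTw α a x y * betaTw α a (x * y) z =
      betaTw α a x (y * z) * betaTw α (x⁻¹ * a * x) y z := by
  have key := congr($(hα.1 a x y z) * $(hα.1 x (x⁻¹ * a * x) y z)⁻¹ *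
    $(hα.1 x y (y⁻¹ * (x⁻¹ * a * x) * y) z) *
    $(hα.1 x y z (z⁻¹ * (y⁻¹ * (x⁻¹ * a * x) * y) * z))⁻¹)
  simp only [betaTw, mul_assoc, mul_inv_rev, mul_inv_cancel_left] at key ⊢
  rw [← div_eq_one]
  convert key using 1
  · apply Additive.ofMul.injective
    simp only [ofMul_mul, ofMul_inv, ofMul_div]
    abel
  · simp

theorem betaTw_mul_div_betaTw (hα : IsNormalized3Cocycle α) {g h u v : G} (hhg : Commute h g)
    (hug : Commute u g) (huh : Commute u h) (hvh : Commute v h) :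
    betaTw α g (u * v) h / betaTw α g h (u * v) =
      betaTw α g u h / betaTw α g h u * (betaTw α g v h / betaTw α g h v) := by
  have hA := hα.betaTw_mul_betaTw g h u v
  have hB := hα.betaTw_mul_betaTw g u v h
  have hC := hα.betaTw_mul_betaTw g u h v
  rw [mul_assoc, ← hhg.eq, inv_mul_cancel_left] at hA
  rw [mul_assoc, ← hug.eq, inv_mul_cancel_left, hvh.eq] at hB
  rw [mul_assoc, ← hug.eq, inv_mul_cancel_left, huh.eq] at hC
  rw [← div_eq_one] at hA hB hC ⊢
  convert congr($hB * $hA * $hC⁻¹) using 1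
  · apply Additive.ofMul.injective
    simp only [ofMul_mul, ofMul_inv, ofMul_div]
    abel
  · simp

variable {g h : G}

theorem rhoTw_mul (hα : IsNormalized3Cocycle α) (hhg : Commute h g) {x y : G}
    (hxh : Commute x h) (hyg : Commute y g) (hyh : Commute y h) :
    rhoTw α g h (x * y) = rhoTw α g h x * rhoTw α g h y := by
  simp only [rhoTw, mul_inv_rev, ← div_eq_mul_inv (G := ℂˣ)]
  rw [hα.betaTw_mul_div_betaTw hhg hyg.inv_left hyh.inv_left hxh.inv_left, mul_comm]

def rhoTwHom (hα : IsNormalized3Cocycle α) (hhg : Commute h g) :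
    ↥(Subgroup.centralizer {g} ⊓ Subgroup.centralizer {h}) →* ℂˣ :=
  MonoidHom.mk' (fun x => rhoTw α g h x) fun x y =>
    hα.rhoTw_mul hhg (Subgroup.mem_centralizer_singleton_iff.mp x.2.2)
      (Subgroup.mem_centralizer_singleton_iff.mp y.2.1)
      (Subgroup.mem_centralizer_singleton_iff.mp y.2.2)

theorem rhoTwHom_eq_one_iff (hα : IsNormalized3Cocycle α) (hhg : Commute h g) :
    hα.rhoTwHom hhg = 1 ↔ IsBetaRegular α g h := by
  simp only [DFunLike.ext_iff, rhoTwHom, MonoidHom.mk'_apply, MonoidHom.one_apply, rhoTw,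
    mul_inv_eq_one, Subtype.forall, Subgroup.mem_inf, Subgroup.mem_centralizer_singleton_iff,
    IsBetaRegular]
  refine ⟨fun H k hkg hkh => ?_, fun H x ⟨hxg, hxh⟩ => ?_⟩
  · simpa using (H k⁻¹ ⟨Commute.inv_left hkg, Commute.inv_left hkh⟩).symm
  · exact (H x⁻¹ (Commute.inv_left hxg) (Commute.inv_left hxh)).symm

end IsNormalized3Cocycle

theorem MonoidHom.inv_card_mul_sum_units_eq_ite {K R : Type*} [Group K] [Fintype K] [Field R]
    [CharZero R] (χ : K →* Rˣ) [Decidable (χ = 1)] :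
    (Fintype.card K : R)⁻¹ * ∑ k, (χ k : R) = if χ = 1 then 1 else 0 := by
  classical
  have hχ : (Units.coeHom R).comp χ = 1 ↔ χ = 1 := by
    simp only [DFunLike.ext_iff, MonoidHom.comp_apply, Units.coeHom_apply, MonoidHom.one_apply,
      Units.val_eq_one]
  have := sum_hom_units ((Units.coeHom R).comp χ)
  simp only [MonoidHom.comp_apply, Units.coeHom_apply, hχ] at this
  rw [this]
  split_ifs <;> simp

open Classical in
theorem average_rhoTw_eq_ite_regular {G : Type*} [Group G] [Fintype G]
    (α : G → G → G → ℂˣ) (hα : IsNormalized3Cocycle α) (g h : G)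
    (hgh : h * g = g * h) :
    ((Finset.univ.filter fun x : G => x * g = g * x ∧ x * h = h * x).card : ℂ)⁻¹ *
      ∑ x ∈ Finset.univ.filter (fun x : G => x * g = g * x ∧ x * h = h * x),
        (rhoTw α g h x : ℂ) =
      if IsBetaRegular α g h then 1 else 0 := by
  have hZ : ∀ x, x ∈ Finset.univ.filter (fun x : G => x * g = g * x ∧ x * h = h * x) ↔
      x ∈ Subgroup.centralizer {g} ⊓ Subgroup.centralizer {h} := by
    simp [Subgroup.mem_inf, Subgroup.mem_centralizer_singleton_iff]
  rw [← Fintype.card_of_subtype _ hZ, Finset.sum_subtype _ hZ,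
    ← hα.rhoTwHom_eq_one_iff hgh]
  exact (hα.rhoTwHom hgh).inv_card_mul_sum_units_eq_ite.trans (by congr)
end

section
/- Let G be a group and α a normalized 3-cocycle on G. For all g, x ∈ G and h ∈ Z_g: h is β_g-regular if and only if xhx⁻¹ (which lies in Z_{xgx⁻¹}) is β_{xgx⁻¹}-regular. -/
section
variable {G : Type*} [Group G] {α : G → G → G → ℂˣ}

/- `ℂˣ` is commutative, so here and below the identities are linear relations in
`Additive ℂˣ`, which `abel` checks. -/
theorem betaTw_twisted_cocycle (hα : IsNormalized3Cocycle α) (g x y z : G) :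
    betaTw α g x y * betaTw α g (x * y) z
      = betaTw α (x⁻¹ * g * x) y z * betaTw α g x (y * z) := by
  have A := congrArg Additive.ofMul (hα.1 g x y z)
  have B := congrArg Additive.ofMul (hα.1 x (x⁻¹ * g * x) y z)
  have C := congrArg Additive.ofMul (hα.1 x y (y⁻¹ * (x⁻¹ * g * x) * y) z)
  have D := congrArg Additive.ofMul (hα.1 x y z (z⁻¹ * (y⁻¹ * (x⁻¹ * g * x) * y) * z))
  apply Additive.ofMul.injective
  simp only [betaTw, mul_assoc, mul_inv_rev, mul_inv_cancel_left, ofMul_mul, ofMul_inv,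
    ofMul_one] at A B C D ⊢
  linear_combination (norm := abel) A - B + C - D

theorem betaTw_twisted_cocycle_of_commute (hα : IsNormalized3Cocycle α) {g x : G}
    (hxg : Commute x g) (y z : G) :
    betaTw α g x y * betaTw α g (x * y) z = betaTw α g y z * betaTw α g x (y * z) := by
  rw [betaTw_twisted_cocycle hα, mul_assoc, ← hxg.eq, inv_mul_cancel_left]

theorem betaTw_div_betaTw_eq_of_semiconj (hα : IsNormalized3Cocycle α) {g h k c h' k' : G}
    (hhg : Commute h g) (hkg : Commute k g) (hhk : Commute h k)
    (hh' : h * c = c * h') (hk' : k * c = c * k') :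
    betaTw α g h k / betaTw α g k h
      = betaTw α (c⁻¹ * g * c) h' k' / betaTw α (c⁻¹ * g * c) k' h' := by
  have hh'k' : h' * k' = k' * h' := mul_left_cancel <| calc
    c * (h' * k') = h * (k * c) := by rw [← mul_assoc, ← hh', mul_assoc, hk']
    _ = k * (h * c) := by rw [← mul_assoc, hhk.eq, mul_assoc]
    _ = c * (k' * h') := by rw [hh', ← mul_assoc, hk', mul_assoc]
  have T₁ := congrArg Additive.ofMul (betaTw_twisted_cocycle_of_commute hα hhg k c)
  have T₂ := congrArg Additive.ofMul (betaTw_twisted_cocycle_of_commute hα hkg h c)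
  have T₃ := congrArg Additive.ofMul (betaTw_twisted_cocycle_of_commute hα hhg c k')
  have T₄ := congrArg Additive.ofMul (betaTw_twisted_cocycle_of_commute hα hkg c h')
  have T₅ := congrArg Additive.ofMul (betaTw_twisted_cocycle hα g c h' k')
  have T₆ := congrArg Additive.ofMul (betaTw_twisted_cocycle hα g c k' h')
  apply Additive.ofMul.injective
  rw [hhk.eq, hk'] at T₁
  rw [hh'] at T₂ T₃
  rw [hk'] at T₄
  rw [hh'k'] at T₅
  simp only [ofMul_mul, ofMul_div] at T₁ T₂ T₃ T₄ T₅ T₆ ⊢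
  linear_combination (norm := abel) T₁ - T₂ - T₃ + T₄ + T₅ - T₆

theorem IsBetaRegular.conj (hα : IsNormalized3Cocycle α) {g h : G} (hhg : Commute h g)
    (hr : IsBetaRegular α g h) (x : G) : IsBetaRegular α (x * g * x⁻¹) (x * h * x⁻¹) := by
  intro k' hk'g hk'h
  have hk' : x * (x⁻¹ * k' * x) * x⁻¹ = k' := by group
  have hkg : Commute (x⁻¹ * k' * x) g := (Commute.conj_iff x).mp (by rwa [hk'])
  have hkh : Commute (x⁻¹ * k' * x) h := (Commute.conj_iff x).mp (by rwa [hk'])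
  have hratio := betaTw_div_betaTw_eq_of_semiconj hα hhg hkg hkh.symm
    (c := x⁻¹) (h' := x * h * x⁻¹) (k' := k') (by group) (by group)
  rw [inv_inv, div_eq_one.mpr (hr _ hkg hkh), eq_comm, div_eq_one] at hratio
  exact hratio

end

theorem isBetaRegular_conj_iff {G : Type*} [Group G] (α : G → G → G → ℂˣ)
    (hα : IsNormalized3Cocycle α) (g x h : G) (hgh : h * g = g * h) :
    IsBetaRegular α g h ↔ IsBetaRegular α (x * g * x⁻¹) (x * h * x⁻¹) := by
  refine ⟨fun hr => hr.conj hα hgh x, fun hr => ?_⟩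
  simpa [mul_assoc] using hr.conj hα ((Commute.conj_iff x).mpr hgh) x⁻¹
end

section
/- Let G be a group and α a normalized 3-cocycle on G. Then every g ∈ G is β_g-regular; that is, β_g(g,h) = β_g(h,g) for all h ∈ Z_g. -/
/-! For `h` commuting with `g`, both sides collapse to `α(g,h,g)`: in `β_g(g,h)` the first and
last factors are `α(g,g,h)^{±1}`, and in `β_g(h,g)` the last two are `α(h,g,g)^{±1}`, because every
conjugate of `g` occurring in them is `g` itself. -/

theorem betaTw_self_left {G : Type*} [Group G] (α : G → G → G → ℂˣ) (a c : G) :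
    betaTw α a a c = α a c (c⁻¹ * a * c) := by
  rw [betaTw, show c⁻¹ * a⁻¹ * a * a * c = c⁻¹ * a * c by group,
    show a⁻¹ * a * a = a by group, mul_right_comm, mul_inv_cancel, one_mul]

theorem betaTw_self_right_of_commute {G : Type*} [Group G] (α : G → G → G → ℂˣ) {a b : G}
    (hab : Commute b a) : betaTw α a b a = α a b a := by
  rw [betaTw, hab.inv_mul_cancel,
    show a⁻¹ * b⁻¹ * a * b * a = a⁻¹ * (b⁻¹ * a * b) * a by group, hab.inv_mul_cancel,
    inv_mul_cancel, one_mul, mul_inv_cancel_right]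

theorem self_isBetaRegular_general {G : Type*} [Group G] (α : G → G → G → ℂˣ)
    (g : G) :
    ∀ h : G, h * g = g * h → betaTw α g g h = betaTw α g h g := by
  intro h (hc : Commute h g)
  rw [betaTw_self_left, hc.inv_mul_cancel, betaTw_self_right_of_commute α hc]

theorem self_isBetaRegular {G : Type*} [Group G] (α : G → G → G → ℂˣ)
    (hα : IsNormalized3Cocycle α) (g : G) :
    ∀ h : G, h * g = g * h → betaTw α g g h = betaTw α g h g :=
  self_isBetaRegular_general α g
end

section
/- Let G be a group and α a normalized 3-cocycle on G. For all g, h ∈ G with gh = hg and all x, y ∈ G: η^g(h, xy) = η^{ygy⁻¹}(yhy⁻¹, x) · η^g(h, y). (This identity expresses the multiplication law A^x A^y = A^{xy} of the torus vertex operators.) -/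
/-- The phase `η^g(h,x) = β_g(x⁻¹, x h x⁻¹) · β_g(h, x⁻¹)⁻¹`. -/
def etaTw {G : Type*} [Group G] (α : G → G → G → ℂˣ) (g h x : G) : ℂˣ :=
  betaTw α g x⁻¹ (x * h * x⁻¹) * (betaTw α g h x⁻¹)⁻¹

/-!
`β_a` is a 2-cocycle twisted by conjugation,
`β_a(u,v) β_a(uv,w) = β_{u⁻¹au}(v,w) β_a(u,vw)`, which is the product of four instances of the
3-cocycle identity. The law for `η` is the product of three instances of this twisted identity,
at `(g, y⁻¹, x⁻¹, xyhy⁻¹x⁻¹)`, `(g, y⁻¹, yhy⁻¹, x⁻¹)` and `(g, h, y⁻¹, x⁻¹)`; in the last one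
`gh = hg` makes the twist `h⁻¹gh` trivial.

Identities between products in `ℂˣ` are checked in `Additive ℂˣ`, where `abel` normalizes.
-/

theorem betaTw_twisted_cocycle_s7 {G : Type*} [Group G] {α : G → G → G → ℂˣ}
    (hα : IsNormalized3Cocycle α) (a u v w : G) :
    betaTw α a u v * betaTw α a (u * v) w =
      betaTw α (u⁻¹ * a * u) v w * betaTw α a u (v * w) := by
  have I₁ := congrArg Additive.ofMul (hα.1 a u v w)
  have I₂ := congrArg Additive.ofMul (hα.1 u (u⁻¹ * a * u) v w)
  have I₃ := congrArg Additive.ofMul (hα.1 u v ((u * v)⁻¹ * a * (u * v)) w)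
  have I₄ := congrArg Additive.ofMul (hα.1 u v w ((u * v * w)⁻¹ * a * (u * v * w)))
  apply Additive.ofMul.injective
  simp only [betaTw, ofMul_mul, ofMul_inv, ofMul_one, mul_assoc, mul_inv_rev,
    mul_inv_cancel_left] at *
  linear_combination (norm := abel) I₁ - I₂ + I₃ - I₄

theorem etaTw_mul_law {G : Type*} [Group G] (α : G → G → G → ℂˣ)
    (hα : IsNormalized3Cocycle α) (g h : G) (hgh : g * h = h * g) (x y : G) :
    etaTw α g h (x * y) =
      etaTw α (y * g * y⁻¹) (y * h * y⁻¹) x * etaTw α g h y := by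
  have hconj : h⁻¹ * g * h = g := by rw [mul_assoc, hgh, inv_mul_cancel_left]
  have S₁ := congrArg Additive.ofMul
    (betaTw_twisted_cocycle_s7 hα g y⁻¹ x⁻¹ (x * y * h * y⁻¹ * x⁻¹))
  have S₂ := congrArg Additive.ofMul (betaTw_twisted_cocycle_s7 hα g y⁻¹ (y * h * y⁻¹) x⁻¹)
  have S₃ := congrArg Additive.ofMul (betaTw_twisted_cocycle_s7 hα g h y⁻¹ x⁻¹)
  rw [hconj] at S₃
  apply Additive.ofMul.injective
  simp only [etaTw, ofMul_mul, ofMul_inv, mul_assoc, mul_inv_rev, inv_inv,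
    inv_mul_cancel_left] at *
  linear_combination (norm := abel) S₁ - S₂ + S₃
end

section
/- Let G be a group and α a normalized 3-cocycle on G. For all g ∈ G, h₁, h₂ ∈ Z_g, and x ∈ G: η^g(h₁, x) · η^g(h₂, x) · η^g(h₁h₂, x)⁻¹ = β_{xgx⁻¹}(xh₁x⁻¹, xh₂x⁻¹) · β_g(h₁, h₂)⁻¹. -/
/-! `β_g` is a 2-cocycle twisted by conjugation,
`β_g(x,y) β_g(xy,z) = β_g(x,yz) β_{x⁻¹gx}(y,z)`, which follows from four instances of the
3-cocycle condition. The identity for `η^g` is the product of three instances of this twisted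
cocycle identity; `h₁ ∈ Z_g` makes the twist `h₁⁻¹gh₁` trivial in two of them. -/

section

variable {G : Type*} [Group G] {α : G → G → G → ℂˣ}

theorem betaTw_mul_betaTw (hα : IsNormalized3Cocycle α) (g x y z : G) :
    betaTw α g x y * betaTw α g (x * y) z =
      betaTw α g x (y * z) * betaTw α (x⁻¹ * g * x) y z := by
  have c₁ := hα.1 g x y z
  have c₂ := hα.1 x (x⁻¹ * g * x) y z
  have c₃ := hα.1 x y (y⁻¹ * (x⁻¹ * g * x) * y) z
  have c₄ := hα.1 x y z (z⁻¹ * (y⁻¹ * (x⁻¹ * g * x) * y) * z)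
  simp only [betaTw, mul_assoc, mul_inv_rev, mul_inv_cancel_left] at c₁ c₂ c₃ c₄ ⊢
  apply Additive.ofMul.injective
  linear_combination (norm := skip) congrArg Additive.ofMul c₁ - congrArg Additive.ofMul c₂
    + congrArg Additive.ofMul c₃ - congrArg Additive.ofMul c₄
  simp only [ofMul_mul, ofMul_inv, ofMul_one]
  abel

theorem betaTw_mul_betaTw_of_eq (hα : IsNormalized3Cocycle α) {g g' x y z xy yz : G}
    (hxy : x * y = xy) (hyz : y * z = yz) (hg : x⁻¹ * g * x = g') :
    betaTw α g x y * betaTw α g xy z = betaTw α g x yz * betaTw α g' y z := by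
  subst hxy hyz hg
  exact betaTw_mul_betaTw hα g x y z

end

theorem etaTw_beta_conj_relation_general {G : Type*} [Group G] (α : G → G → G → ℂˣ)
    (hα : IsNormalized3Cocycle α) (g h₁ h₂ x : G)
    (h₁g : h₁ * g = g * h₁) :
    etaTw α g h₁ x * etaTw α g h₂ x * (etaTw α g (h₁ * h₂) x)⁻¹ =
      betaTw α (x * g * x⁻¹) (x * h₁ * x⁻¹) (x * h₂ * x⁻¹) *
        (betaTw α g h₁ h₂)⁻¹ := by
  have hg : h₁⁻¹ * g * h₁ = g := Commute.inv_mul_cancel h₁g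
  have e₁ : betaTw α g x⁻¹ (x * h₁ * x⁻¹) * betaTw α g (h₁ * x⁻¹) (x * h₂ * x⁻¹) =
      betaTw α g x⁻¹ (x * (h₁ * h₂) * x⁻¹) *
        betaTw α (x * g * x⁻¹) (x * h₁ * x⁻¹) (x * h₂ * x⁻¹) :=
    betaTw_mul_betaTw_of_eq hα (by group) (by group) (by group)
  have e₂ : betaTw α g h₁ x⁻¹ * betaTw α g (h₁ * x⁻¹) (x * h₂ * x⁻¹) =
      betaTw α g h₁ (h₂ * x⁻¹) * betaTw α g x⁻¹ (x * h₂ * x⁻¹) :=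
    betaTw_mul_betaTw_of_eq hα rfl (by group) hg
  have e₃ : betaTw α g h₁ h₂ * betaTw α g (h₁ * h₂) x⁻¹ =
      betaTw α g h₁ (h₂ * x⁻¹) * betaTw α g h₂ x⁻¹ :=
    betaTw_mul_betaTw_of_eq hα rfl rfl hg
  unfold etaTw
  apply Additive.ofMul.injective
  linear_combination (norm := skip) congrArg Additive.ofMul e₁ - congrArg Additive.ofMul e₂
    + congrArg Additive.ofMul e₃
  simp only [ofMul_mul, ofMul_inv]
  abel

theorem etaTw_beta_conj_relation {G : Type*} [Group G] (α : G → G → G → ℂˣ)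
    (hα : IsNormalized3Cocycle α) (g h₁ h₂ x : G)
    (h₁g : h₁ * g = g * h₁) (h₂g : h₂ * g = g * h₂) :
    etaTw α g h₁ x * etaTw α g h₂ x * (etaTw α g (h₁ * h₂) x)⁻¹ =
      betaTw α (x * g * x⁻¹) (x * h₁ * x⁻¹) (x * h₂ * x⁻¹) *
        (betaTw α g h₁ h₂)⁻¹ :=
  etaTw_beta_conj_relation_general α hα g h₁ h₂ x h₁g
end

section
/- Let G be a group, α a normalized 3-cocycle on G, g ∈ G, x ∈ G, and ρ a β_g-representation of Z_g by invertible n×n complex matrices. Define ρ' on Z_{xgx⁻¹} = xZ_gx⁻¹ by ρ'(k) = η^g(x⁻¹kx, x) · ρ(x⁻¹kx). Then ρ' is a β_{xgx⁻¹}-representation of Z_{xgx⁻¹}: for all k₁, k₂ ∈ Z_{xgx⁻¹}, ρ'(k₁) · ρ'(k₂) = β_{xgx⁻¹}(k₁, k₂) · ρ'(k₁k₂). -/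
/-! `β_a` satisfies the twisted 2-cocycle identity
`β_a(u,v) β_a(uv,w) = β_a(u,vw) β_{u⁻¹au}(v,w)`, a product of four instances of the 3-cocycle
identity. Three instances of it show that for `h₁ ∈ Z_g` the coboundary of `η^g(·,x)` is
`β_{xgx⁻¹}(x h₁ x⁻¹, x h₂ x⁻¹) / β_g(h₁,h₂)`, so rescaling `ρ` by `η^g(·,x)` turns the
`β_g`-cocycle of `ρ` into the `β_{xgx⁻¹}`-cocycle. -/

section

variable {G : Type*} [Group G] {α : G → G → G → ℂˣ}

/- The identities among values of `α` are added up in `Additive ℂˣ`, where `linear_combination`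
applies, after `group` has brought all arguments in `G` to a normal form. -/
theorem betaTw_mul_betaTw_s9 (hα : IsNormalized3Cocycle α) (a u v w : G) :
    betaTw α a u v * betaTw α a (u * v) w =
      betaTw α a u (v * w) * betaTw α (u⁻¹ * a * u) v w := by
  have e₁ := congrArg Additive.ofMul (hα.1 a u v w)
  have e₂ := congrArg Additive.ofMul (hα.1 u v (v⁻¹ * u⁻¹ * a * u * v) w)
  have e₃ := congrArg Additive.ofMul (hα.1 u (u⁻¹ * a * u) v w)
  have e₄ := congrArg Additive.ofMul (hα.1 u v w (w⁻¹ * v⁻¹ * u⁻¹ * a * u * v * w))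
  apply Additive.ofMul.injective
  simp only [betaTw, ofMul_mul, ofMul_inv, ofMul_one] at e₁ e₂ e₃ e₄ ⊢
  group at e₁ e₂ e₃ e₄ ⊢
  linear_combination (norm := abel) e₁ + e₂ - e₃ - e₄

theorem etaTw_mul_etaTw_mul_betaTw (hα : IsNormalized3Cocycle α) {g h₁ : G}
    (hh₁ : Commute h₁ g) (h₂ x : G) :
    etaTw α g h₁ x * etaTw α g h₂ x * betaTw α g h₁ h₂ =
      betaTw α (x * g * x⁻¹) (x * h₁ * x⁻¹) (x * h₂ * x⁻¹) * etaTw α g (h₁ * h₂) x := by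
  have hg : h₁⁻¹ * g * h₁ = g := by rw [mul_assoc, ← hh₁.eq, inv_mul_cancel_left]
  have e₁ := congrArg Additive.ofMul (betaTw_mul_betaTw_s9 hα g h₁ h₂ x⁻¹)
  have e₂ := congrArg Additive.ofMul (betaTw_mul_betaTw_s9 hα g h₁ x⁻¹ (x * h₂ * x⁻¹))
  have e₃ := congrArg Additive.ofMul
    (betaTw_mul_betaTw_s9 hα g x⁻¹ (x * h₁ * x⁻¹) (x * h₂ * x⁻¹))
  rw [hg] at e₁ e₂
  apply Additive.ofMul.injective
  simp only [etaTw, ofMul_mul, ofMul_inv] at e₁ e₂ e₃ ⊢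
  group at e₁ e₂ e₃ ⊢
  linear_combination (norm := abel) e₁ - e₂ + e₃

end

theorem conj_projective_rep_general {G : Type*} [Group G] (n : ℕ)
    (α : G → G → G → ℂˣ) (hα : IsNormalized3Cocycle α) (g x : G)
    (ρ : G → Matrix (Fin n) (Fin n) ℂ)
    (hrep : ∀ a b : G, a * g = g * a → b * g = g * b →
      ρ a * ρ b = (betaTw α g a b : ℂ) • ρ (a * b)) :
    ∀ k₁ k₂ : G,
      k₁ * (x * g * x⁻¹) = (x * g * x⁻¹) * k₁ →
      k₂ * (x * g * x⁻¹) = (x * g * x⁻¹) * k₂ →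
      ((etaTw α g (x⁻¹ * k₁ * x) x : ℂ) • ρ (x⁻¹ * k₁ * x)) *
          ((etaTw α g (x⁻¹ * k₂ * x) x : ℂ) • ρ (x⁻¹ * k₂ * x)) =
        (betaTw α (x * g * x⁻¹) k₁ k₂ : ℂ) •
          ((etaTw α g (x⁻¹ * (k₁ * k₂) * x) x : ℂ) • ρ (x⁻¹ * (k₁ * k₂) * x)) := by
  intro k₁ k₂ hk₁ hk₂
  obtain ⟨h₁, rfl⟩ : ∃ h, x * h * x⁻¹ = k₁ := ⟨x⁻¹ * k₁ * x, by group⟩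
  obtain ⟨h₂, rfl⟩ : ∃ h, x * h * x⁻¹ = k₂ := ⟨x⁻¹ * k₂ * x, by group⟩
  have hc₁ : Commute h₁ g := (Commute.conj_iff x).mp hk₁
  have hc₂ : Commute h₂ g := (Commute.conj_iff x).mp hk₂
  have hη : (etaTw α g h₁ x : ℂ) * etaTw α g h₂ x * betaTw α g h₁ h₂ =
      betaTw α (x * g * x⁻¹) (x * h₁ * x⁻¹) (x * h₂ * x⁻¹) * etaTw α g (h₁ * h₂) x := by
    exact_mod_cast congrArg Units.val (etaTw_mul_etaTw_mul_betaTw hα hc₁ h₂ x)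
  have hconj (h : G) : x⁻¹ * (x * h * x⁻¹) * x = h := by group
  rw [hconj, hconj, show x * h₁ * x⁻¹ * (x * h₂ * x⁻¹) = x * (h₁ * h₂) * x⁻¹ by group, hconj,
    smul_mul_smul_comm, hrep h₁ h₂ hc₁.eq hc₂.eq, smul_smul, hη, mul_smul]

theorem conj_projective_rep {G : Type*} [Group G] (n : ℕ)
    (α : G → G → G → ℂˣ) (hα : IsNormalized3Cocycle α) (g x : G)
    (ρ : G → Matrix (Fin n) (Fin n) ℂ)
    (hinv : ∀ k : G, k * g = g * k → IsUnit (ρ k))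
    (hrep : ∀ a b : G, a * g = g * a → b * g = g * b →
      ρ a * ρ b = (betaTw α g a b : ℂ) • ρ (a * b)) :
    ∀ k₁ k₂ : G,
      k₁ * (x * g * x⁻¹) = (x * g * x⁻¹) * k₁ →
      k₂ * (x * g * x⁻¹) = (x * g * x⁻¹) * k₂ →
      ((etaTw α g (x⁻¹ * k₁ * x) x : ℂ) • ρ (x⁻¹ * k₁ * x)) *
          ((etaTw α g (x⁻¹ * k₂ * x) x : ℂ) • ρ (x⁻¹ * k₂ * x)) =
        (betaTw α (x * g * x⁻¹) k₁ k₂ : ℂ) •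
          ((etaTw α g (x⁻¹ * (k₁ * k₂) * x) x : ℂ) • ρ (x⁻¹ * (k₁ * k₂) * x)) :=
  conj_projective_rep_general n α hα g x ρ hrep
end

section
/- Let G be a group, α a normalized 3-cocycle on G, g ∈ G, and ρ a β_g-representation of Z_g by invertible n×n complex matrices with ρ(e) = 1. If h ∈ Z_g is not β_g-regular, i.e. there exists k ∈ Z_{g,h} with β_g(k,h) ≠ β_g(h,k), then the trace of ρ(h) is zero. -/
/-! Since `k` and `h` commute, conjugating `ρ(h)` by `ρ(k)` multiplies it by the scalar
`β_g(k,h) / β_g(h,k) ≠ 1`; conjugation preserves the trace, so the trace must vanish. -/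

theorem Matrix.trace_eq_zero_of_smul_mul_eq_smul_mul {m R : Type*} [Fintype m] [DecidableEq m]
    [CommRing R] [NoZeroDivisors R] {A B : Matrix m m R} {a b : R} (hA : IsUnit A)
    (hab : a ≠ b) (h : a • (A * B) = b • (B * A)) : B.trace = 0 := by
  obtain ⟨U, rfl⟩ := hA
  have hconj : a • ((U : Matrix m m R) * B * U⁻¹.val) = b • B := by
    rw [← smul_mul_assoc, h, smul_mul_assoc, mul_assoc, Units.mul_inv, mul_one]
  have htrace : a * B.trace = b * B.trace := by
    simpa only [trace_smul, trace_mul_cycle, Units.inv_mul, one_mul, smul_eq_mul] using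
      congr_arg trace hconj
  have hsub : (a - b) * B.trace = 0 := by rw [sub_mul, htrace, sub_self]
  exact (mul_eq_zero.mp hsub).resolve_left (sub_ne_zero.mpr hab)

theorem trace_eq_zero_of_not_regular_general {G : Type*} [Group G] (n : ℕ)
    (α : G → G → G → ℂˣ) (g : G)
    (ρ : G → Matrix (Fin n) (Fin n) ℂ)
    (hinv : ∀ k : G, k * g = g * k → IsUnit (ρ k))
    (hrep : ∀ a b : G, a * g = g * a → b * g = g * b →
      ρ a * ρ b = (betaTw α g a b : ℂ) • ρ (a * b))
    (h : G) (hhg : h * g = g * h)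
    (hirr : ∃ k : G, k * g = g * k ∧ k * h = h * k ∧
      betaTw α g k h ≠ betaTw α g h k) :
    Matrix.trace (ρ h) = 0 := by
  obtain ⟨k, hkg, hkh, hne⟩ := hirr
  have hcomm : (betaTw α g h k : ℂ) • (ρ k * ρ h) = (betaTw α g k h : ℂ) • (ρ h * ρ k) := by
    rw [hrep k h hkg hhg, hrep h k hhg hkg, hkh, smul_smul, smul_smul, mul_comm]
  exact Matrix.trace_eq_zero_of_smul_mul_eq_smul_mul (hinv k hkg)
    (Units.val_injective.ne hne.symm) hcomm

theorem trace_eq_zero_of_not_regular {G : Type*} [Group G] (n : ℕ)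
    (α : G → G → G → ℂˣ) (hα : IsNormalized3Cocycle α) (g : G)
    (ρ : G → Matrix (Fin n) (Fin n) ℂ)
    (hinv : ∀ k : G, k * g = g * k → IsUnit (ρ k))
    (hrep : ∀ a b : G, a * g = g * a → b * g = g * b →
      ρ a * ρ b = (betaTw α g a b : ℂ) • ρ (a * b))
    (hone : ρ 1 = 1)
    (h : G) (hhg : h * g = g * h)
    (hirr : ∃ k : G, k * g = g * k ∧ k * h = h * k ∧
      betaTw α g k h ≠ betaTw α g h k) :
    Matrix.trace (ρ h) = 0 :=
  trace_eq_zero_of_not_regular_general n α g ρ hinv hrep h hhg hirr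
end

section
/- Let G be a group, α a normalized 3-cocycle on G, g ∈ G, and ρ a β_g-representation of Z_g by invertible n×n complex matrices. Then the matrix ρ(g) commutes with ρ(h) for every h ∈ Z_g: ρ(g)·ρ(h) = ρ(h)·ρ(g). -/
/-! Both `β_g(g, h)` and `β_g(h, g)` collapse to `α(g, h, g)` once `h` commutes with `g`, since
every conjugate of `g` occurring in them is `g` itself and the remaining factors cancel. Hence
`ρ(g) ρ(h) = α(g, h, g) ρ(gh) = α(g, h, g) ρ(hg) = ρ(h) ρ(g)`. -/

section BetaTw

variable {G : Type*} [Group G] (α : G → G → G → ℂˣ) {a b : G}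

theorem betaTw_self_left_s11 (hab : Commute b a) : betaTw α a a b = α a b a := by
  have hconj : b⁻¹ * a * b = a := hab.inv_mul_cancel
  have h₁ : b⁻¹ * a⁻¹ * a * a * b = a := by rw [inv_mul_cancel_right, hconj]
  have h₂ : a⁻¹ * a * a = a := by rw [inv_mul_cancel, one_mul]
  rw [betaTw, h₁, h₂, mul_right_comm, mul_inv_cancel, one_mul]

theorem betaTw_self_right (hab : Commute b a) : betaTw α a b a = α a b a := by
  have hconj : b⁻¹ * a * b = a := hab.inv_mul_cancel
  have h₁ : a⁻¹ * b⁻¹ * a * b * a = a := by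
    rw [mul_assoc a⁻¹, mul_assoc a⁻¹, hconj, inv_mul_cancel, one_mul]
  rw [betaTw, h₁, hconj, mul_inv_cancel_right]

end BetaTw

theorem rep_g_commutes_general {G : Type*} [Group G] (n : ℕ)
    (α : G → G → G → ℂˣ) (g : G)
    (ρ : G → Matrix (Fin n) (Fin n) ℂ)
    (hrep : ∀ a b : G, a * g = g * a → b * g = g * b →
      ρ a * ρ b = (betaTw α g a b : ℂ) • ρ (a * b)) :
    ∀ h : G, h * g = g * h → ρ g * ρ h = ρ h * ρ g := by
  intro h hc
  rw [hrep g h rfl hc, hrep h g hc rfl, hc, betaTw_self_left_s11 α hc, betaTw_self_right α hc]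

theorem rep_g_commutes {G : Type*} [Group G] (n : ℕ)
    (α : G → G → G → ℂˣ) (hα : IsNormalized3Cocycle α) (g : G)
    (ρ : G → Matrix (Fin n) (Fin n) ℂ)
    (hinv : ∀ k : G, k * g = g * k → IsUnit (ρ k))
    (hrep : ∀ a b : G, a * g = g * a → b * g = g * b →
      ρ a * ρ b = (betaTw α g a b : ℂ) • ρ (a * b)) :
    ∀ h : G, h * g = g * h → ρ g * ρ h = ρ h * ρ g :=
  rep_g_commutes_general n α g ρ hrep
end

section
/- Let G be a group, α a normalized 3-cocycle on G, and g ∈ G an element of finite order p. Then for every x ∈ G (so that xgx⁻¹ also has order p): ∏_{n=0}^{p−1} α(xgx⁻¹, (xgx⁻¹)ⁿ, xgx⁻¹) = ∏_{n=0}^{p−1} α(g, gⁿ, g). That is, the quantity ω = ∏_{n=0}^{p−1} α(g, gⁿ, g) depends only on the conjugacy class of g. -/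
open Finset

section Cochains

variable {G M : Type*} [Group G] [CommGroup M]

def IsMulCocycle₃ (α : G → G → G → M) : Prop :=
  ∀ a b c d : G, α b c d * α a (b * c) d * α a b c = α (a * b) c d * α a b (c * d)

theorem IsNormalized3Cocycle.isMulCocycle₃ {α : G → G → G → ℂˣ}
    (hα : IsNormalized3Cocycle α) : IsMulCocycle₃ α := fun a b c d => by
  rw [← div_eq_one, ← hα.1 a b c d]
  simp only [div_eq_mul_inv, mul_inv, mul_comm, mul_left_comm, mul_assoc]

def mulCoboundary₂ (θ : G → G → M) (a b c : G) : M :=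
  θ b c * θ a (b * c) / (θ (a * b) c * θ a b)

def conjCochain (α : G → G → G → M) (x a b : G) : M :=
  α (x * a * x⁻¹) x b / (α (x * a * x⁻¹) (x * b * x⁻¹) x * α x a b)

theorem IsMulCocycle₃.conj_eq_mul_mulCoboundary₂ {α : G → G → G → M} (hα : IsMulCocycle₃ α)
    (x a b c : G) :
    α (x * a * x⁻¹) (x * b * x⁻¹) (x * c * x⁻¹) =
      α a b c * mulCoboundary₂ (conjCochain α x) a b c := by
  have hα' := fun a b c d => congrArg Additive.ofMul (hα a b c d)
  have hslide : ∀ y : G, x * y * x⁻¹ * x = x * y := fun y => inv_mul_cancel_right _ _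
  -- slide `x` from the right of `(xax⁻¹, xbx⁻¹, xcx⁻¹, x)` to the left of `(x, a, b, c)`
  have P₁ := hα' (x * a * x⁻¹) (x * b * x⁻¹) (x * c * x⁻¹) x
  have P₂ := hα' (x * a * x⁻¹) (x * b * x⁻¹) x c
  have P₃ := hα' (x * a * x⁻¹) x b c
  have P₄ := hα' x a b c
  apply Additive.ofMul.injective
  simp only [hslide, conj_mul, mulCoboundary₂, conjCochain, ofMul_mul, ofMul_div]
    at P₁ P₂ P₃ P₄ ⊢
  linear_combination (norm := abel) P₁ - P₂ + P₃ - P₄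

theorem prod_range_mulCoboundary₂_pow_eq_one (θ : G → G → M) {g : G} {p : ℕ} (hg : g ^ p = 1) :
    ∏ k ∈ range p, mulCoboundary₂ θ g (g ^ k) g = 1 := by
  have hterm : ∀ k, mulCoboundary₂ θ g (g ^ k) g =
      (θ g (g ^ (k + 1)) / θ g (g ^ k)) / (θ (g ^ (k + 1)) g / θ (g ^ k) g) := fun k => by
    rw [mulCoboundary₂, ← pow_succ, ← pow_succ', div_div_div_eq, mul_comm (θ (g ^ k) g),
      mul_comm (θ (g ^ (k + 1)) g)]
  simp only [hterm, prod_div_distrib, prod_range_div (fun k => θ g (g ^ k)),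
    prod_range_div (fun k => θ (g ^ k) g), hg, pow_zero, div_self']

end Cochains

theorem omega_conjugation_invariant_general {G : Type*} [Group G]
    (α : G → G → G → ℂˣ) (hα : IsNormalized3Cocycle α) (g : G) (p : ℕ)
    (hgp : g ^ p = 1) (x : G) :
    ∏ k ∈ Finset.range p,
        α (x * g * x⁻¹) ((x * g * x⁻¹) ^ k) (x * g * x⁻¹) =
      ∏ k ∈ Finset.range p, α g (g ^ k) g := by
  simp only [conj_pow, hα.isMulCocycle₃.conj_eq_mul_mulCoboundary₂, prod_mul_distrib,
    prod_range_mulCoboundary₂_pow_eq_one _ hgp, mul_one]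

theorem omega_conjugation_invariant {G : Type*} [Group G]
    (α : G → G → G → ℂˣ) (hα : IsNormalized3Cocycle α) (g : G) (p : ℕ)
    (hp : 0 < p) (hgp : g ^ p = 1)
    (hleast : ∀ q : ℕ, 0 < q → q < p → g ^ q ≠ 1) (x : G) :
    ∏ k ∈ Finset.range p,
        α (x * g * x⁻¹) ((x * g * x⁻¹) ^ k) (x * g * x⁻¹) =
      ∏ k ∈ Finset.range p, α g (g ^ k) g :=
  omega_conjugation_invariant_general α hα g p hgp x
end

section
/- Let G be a group, α a normalized 3-cocycle on G, and β : G × G → ℂˣ a normalized 2-cochain (β(e,x) = β(x,e) = 1 for all x ∈ G). Define the equivalent 3-cocycle α'(g₀,g₁,g₂) = α(g₀,g₁,g₂) · β(g₁,g₂)·β(g₀,g₁g₂)·β(g₀g₁,g₂)⁻¹·β(g₀,g₁)⁻¹, and let β'_a be the function built from α' in the same way β_a is built from α. Then for all a, b, c ∈ G: β'_a(b,c) = β_a(b,c) · ε_a(b) · ε_{b⁻¹ab}(c) · ε_a(bc)⁻¹, where ε_a(x) = β(x, x⁻¹ax) · β(a, x)⁻¹. (Equivalent 3-cocycles yield twisted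 2-cocycles differing by the twisted 2-coboundary of ε.) -/
/-- The twisted 1-cochain `ε_a(x) = β(x, x⁻¹ a x) · β(a, x)⁻¹`. -/
def epsTw {G : Type*} [Group G] (β : G → G → ℂˣ) (a x : G) : ℂˣ :=
  β x (x⁻¹ * a * x) * (β a x)⁻¹

/-! `β_a` is multiplicative in the 3-cocycle, so it suffices to evaluate it on the coboundary `δβ`
relating `α'` to `α`: once the conjugates are identified, three pairs among the twelve `β`-factors of
`β_a(δβ)` cancel and the remaining six are the twisted coboundary of `ε`. -/

section

variable {G : Type*} [Group G]

def coboundary₂ (β : G → G → ℂˣ) (g₀ g₁ g₂ : G) : ℂˣ :=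
  β g₁ g₂ * β g₀ (g₁ * g₂) * (β (g₀ * g₁) g₂)⁻¹ * (β g₀ g₁)⁻¹

theorem betaTw_mul (α γ : G → G → G → ℂˣ) (a b c : G) :
    betaTw (fun g₀ g₁ g₂ => α g₀ g₁ g₂ * γ g₀ g₁ g₂) a b c =
      betaTw α a b c * betaTw γ a b c := by
  simp only [betaTw, mul_inv]
  ac_rfl

theorem betaTw_coboundary₂ (β : G → G → ℂˣ) (a b c : G) :
    betaTw (coboundary₂ β) a b c =
      epsTw β a b * epsTw β (b⁻¹ * a * b) c * (epsTw β a (b * c))⁻¹ := by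
  have hb : b * (b⁻¹ * a * b) = a * b := by group
  have hc : c * (c⁻¹ * b⁻¹ * a * b * c) = b⁻¹ * a * b * c := by group
  have hbc : (b * c)⁻¹ * a * (b * c) = c⁻¹ * b⁻¹ * a * b * c := by group
  have hcb : c⁻¹ * (b⁻¹ * a * b) * c = c⁻¹ * b⁻¹ * a * b * c := by group
  simp only [betaTw, epsTw, coboundary₂]
  rw [hb, hc, hbc, hcb]
  apply Additive.ofMul.injective
  simp only [ofMul_mul, ofMul_inv]
  abel

end

theorem betaTw_of_equivalent_cocycle_general {G : Type*} [Group G]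
    (α : G → G → G → ℂˣ)
    (β : G → G → ℂˣ) (a b c : G) :
    betaTw (fun g₀ g₁ g₂ =>
        α g₀ g₁ g₂ *
          (β g₁ g₂ * β g₀ (g₁ * g₂) * (β (g₀ * g₁) g₂)⁻¹ * (β g₀ g₁)⁻¹))
        a b c =
      betaTw α a b c * epsTw β a b * epsTw β (b⁻¹ * a * b) c *
        (epsTw β a (b * c))⁻¹ := by
  calc _ = betaTw α a b c * betaTw (coboundary₂ β) a b c := betaTw_mul α (coboundary₂ β) a b c
    _ = _ := by rw [betaTw_coboundary₂]; simp only [mul_assoc]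

theorem betaTw_of_equivalent_cocycle {G : Type*} [Group G]
    (α : G → G → G → ℂˣ) (hα : IsNormalized3Cocycle α)
    (β : G → G → ℂˣ) (hβ : ∀ x : G, β 1 x = 1 ∧ β x 1 = 1) (a b c : G) :
    betaTw (fun g₀ g₁ g₂ =>
        α g₀ g₁ g₂ *
          (β g₁ g₂ * β g₀ (g₁ * g₂) * (β (g₀ * g₁) g₂)⁻¹ * (β g₀ g₁)⁻¹))
        a b c =
      betaTw α a b c * epsTw β a b * epsTw β (b⁻¹ * a * b) c *
        (epsTw β a (b * c))⁻¹ :=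
  betaTw_of_equivalent_cocycle_general α β a b c
end

section
/- Let G be a group and let β_a, β'_a : G × G → ℂˣ (for each a ∈ G) be families of functions related by a twisted 2-coboundary: β'_a(x,y) = β_a(x,y) · ε_a(x) · ε_{x⁻¹ax}(y) · ε_a(xy)⁻¹ for all a,x,y ∈ G, for some family of functions ε_a : G → ℂˣ. Then for every g ∈ G, h ∈ Z_g, and x ∈ Z_{g,h}: β'_g(x⁻¹, h) · β'_g(h, x⁻¹)⁻¹ = β_g(x⁻¹, h) · β_g(h, x⁻¹)⁻¹. (The phases ρ^g(h,x), and hence the ground state degeneracy, are unchanged by a twisted 2-coboundary modification of the twisted 2-cocycles.) -/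
/-! Conjugation by an element commuting with `a` fixes `a`, so on the centraliser of `a` the twisted
coboundary is an ordinary coboundary `ε a x * ε a y / ε a (x * y)`. That factor is symmetric in `x`
and `y` as soon as `x` and `y` commute, so it cancels from `β' a x y / β' a y x`. -/

section TwistedCoboundary

variable {G M : Type*} [Group G] [CommGroup M] {β β' : G → G → G → M} {ε : G → G → M}

theorem twistedCoboundary_apply_of_commute
    (hrel : ∀ a x y : G, β' a x y = β a x y * ε a x * ε (x⁻¹ * a * x) y * (ε a (x * y))⁻¹)
    {a x : G} (hxa : Commute x a) (y : G) :
    β' a x y = β a x y * (ε a x * ε a y / ε a (x * y)) := by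
  rw [hrel, hxa.inv_mul_cancel, div_eq_mul_inv]
  simp only [mul_assoc]

theorem twistedCoboundary_div_swap
    (hrel : ∀ a x y : G, β' a x y = β a x y * ε a x * ε (x⁻¹ * a * x) y * (ε a (x * y))⁻¹)
    {a x y : G} (hxa : Commute x a) (hya : Commute y a) (hxy : Commute x y) :
    β' a x y / β' a y x = β a x y / β a y x := by
  rw [twistedCoboundary_apply_of_commute hrel hxa, twistedCoboundary_apply_of_commute hrel hya,
    hxy.eq, mul_comm (ε a y) (ε a x), mul_div_mul_right_eq_div]

end TwistedCoboundary

theorem rho_invariant_under_twisted_coboundary {G : Type*} [Group G]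
    (β β' : G → G → G → ℂˣ) (ε : G → G → ℂˣ)
    (hrel : ∀ a x y : G,
      β' a x y = β a x y * ε a x * ε (x⁻¹ * a * x) y * (ε a (x * y))⁻¹)
    (g h x : G) (hhg : h * g = g * h) (hxg : x * g = g * x)
    (hxh : x * h = h * x) :
    β' g x⁻¹ h * (β' g h x⁻¹)⁻¹ = β g x⁻¹ h * (β g h x⁻¹)⁻¹ := by
  have hxg' : Commute x⁻¹ g := Commute.inv_left hxg
  have hxh' : Commute x⁻¹ h := Commute.inv_left hxh
  simpa only [div_eq_mul_inv] using twistedCoboundary_div_swap hrel hxg' hhg hxh'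
end

section
/- Let m ≥ 1 and q be integers, and set f = m / gcd(q, m). Then (1/m³) · Σ_{g,h,x ∈ (ℤ/mℤ)³} exp( (2πi·q/m) · det M(g,h,x) ) = (m⁶/f³) · ∏_{p prime, p ∣ f} [ (p^{k_p} − 1)(1 + p⁻¹ + p⁻²) + 1 ], where M(g,h,x) is the 3×3 integer matrix whose rows are the standard representatives in {0,…,m−1}³ of g, h, x, and k_p is the multiplicity of p in the prime factorization of f. (This sum is the ground state degeneracy on the torus of the twisted quantum double model with group ℤ_m × ℤ_m × ℤ_m and 3-cocycle α_III^q(a,b,c) = exp(2πi·q·a₁b₂c₃/m), whose associated twisted 2-cocycle is β_a(b,c) = exp{(2πi·q/m)(a₁b₂c₃ − b₁a₂c₃ + b₁c₂a₃)}.) -/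
/-!
`det M(g, h, x) = g ⬝ᵥ (h ⨯₃ x)`, so the sum over `g` is a character sum over `(ℤ/m)³`: it is
`m³` when `q • (h ⨯₃ x) = 0` in `ℤ/m` and vanishes otherwise. As `q c ≡ 0 (mod m)` iff
`c ≡ 0 (mod f)`, the remaining count of pairs `(h, x)` is `(m/f)⁶ N(f)`, where `N(n)` is the number
of pairs over `ℤ/n` with vanishing cross product. `N` is multiplicative by the Chinese remainder
theorem. Over `ℤ/p^(k+1)`, a vector with a unit coordinate has vanishing cross product exactly with
its `p^(k+1)` scalar multiples; every other vector is `p • h'` for `p³` choices of `h'`, and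
`(p • h') ⨯₃ x = 0` iff `h' ⨯₃ x ≡ 0 (mod p^k)`. Hence
`N(p^(k+1)) = p³ N(p^k) + (p^(3k+3) - p^(3k)) p^(k+1)`, which solves to
`N(p^k) = p^(3k) ((p^k - 1)(1 + p⁻¹ + p⁻²) + 1)`.
-/

open Finset Matrix

section Fibres

variable {G H : Type*} [AddCommGroup G] [AddCommGroup H] [Fintype G] [Fintype H]

theorem AddMonoidHom.sum_comp_of_surjective {M : Type*} [AddCommMonoid M] (φ : G →+ H)
    (hφ : Function.Surjective φ) (F : H → M) : ∑ a, F (φ a) = Nat.card φ.ker • ∑ b, F b := by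
  classical
  set σ := Function.surjInv hφ
  have hσ : ∀ b, φ (σ b) = b := Function.surjInv_eq hφ
  -- a set-theoretic section of `φ` splits `G` as `H × ker φ`
  let e : G ≃ H × φ.ker :=
    { toFun a := (φ a, ⟨a - σ (φ a), by simp [hσ]⟩)
      invFun bk := σ bk.1 + bk.2
      left_inv a := by simp
      right_inv bk := by
        obtain ⟨b, k, hk⟩ := bk
        simp_all [AddMonoidHom.mem_ker.mp hk] }
  rw [Fintype.sum_equiv e (fun a => F (φ a)) (fun bk => F bk.1) fun _ => rfl,
    Fintype.sum_prod_type, Nat.card_eq_fintype_card, smul_sum]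
  simp [sum_const, card_univ]

theorem AddMonoidHom.card_subtype_comp_of_surjective (φ : G →+ H) (hφ : Function.Surjective φ)
    (P : H → Prop) : Nat.card {a // P (φ a)} = Nat.card φ.ker * Nat.card {b // P b} := by
  classical
  have := φ.sum_comp_of_surjective hφ fun b => if P b then 1 else 0
  simpa only [← card_filter, ← Fintype.card_subtype, ← Nat.card_eq_fintype_card, smul_eq_mul]
    using this

end Fibres

theorem Nat.card_subtype_prod_eq_sum {α β : Type*} [Fintype α] [Finite β] (P : α → β → Prop) :
    Nat.card {v : α × β // P v.1 v.2} = ∑ a, Nat.card {b // P a b} := by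
  rw [Nat.card_congr (Equiv.subtypeProdEquivSigmaSubtype P), Nat.card_sigma]

theorem AddChar.sum_apply_dotProduct {R R' ι : Type*} [CommRing R] [Fintype R] [DecidableEq R]
    [CommRing R'] [IsDomain R'] [Fintype ι] [DecidableEq ι] {ψ : AddChar R R'}
    (hψ : ψ.IsPrimitive) (w : ι → R) :
    ∑ g : ι → R, ψ (g ⬝ᵥ w) = if w = 0 then (Fintype.card R : R') ^ Fintype.card ι else 0 := by
  have hprod (g : ι → R) : ψ (g ⬝ᵥ w) = ∏ i, ψ (g i * w i) := by
    have := map_prod ψ.toMonoidHom (fun i => Multiplicative.ofAdd (g i * w i)) univ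
    rwa [← ofAdd_sum] at this
  simp_rw [hprod]
  rw [← Fintype.prod_sum (fun i t => ψ (t * w i))]
  simp_rw [AddChar.sum_mulShift _ hψ, apply_ite (Nat.cast : ℕ → R'), Nat.cast_zero]
  rw [Finset.prod_ite_zero, prod_const, card_univ]
  simp only [mem_univ, true_implies, funext_iff, Pi.zero_apply]

section Cross

variable {R S : Type*} [CommRing R] [CommRing S]

theorem RingHom.map_cross (f : R →+* S) (u v : Fin 3 → R) :
    f ∘ (u ⨯₃ v) = (f ∘ u) ⨯₃ (f ∘ v) := by
  ext i
  fin_cases i <;> simp [cross_apply]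

theorem smul_cross_eq_zero_iff {a : R} (φ : R →+* S) (ha : ∀ c, a * c = 0 ↔ φ c = 0)
    (u v : Fin 3 → R) : a • (u ⨯₃ v) = 0 ↔ (φ ∘ u) ⨯₃ (φ ∘ v) = 0 := by
  simp only [← RingHom.map_cross, funext_iff, Pi.smul_apply, smul_eq_mul, Pi.zero_apply,
    Function.comp_apply, ha]

theorem cross_eq_zero_iff_exists_smul {h : Fin 3 → R} {i : Fin 3} (hi : IsUnit (h i))
    (x : Fin 3 → R) : h ⨯₃ x = 0 ↔ ∃ t : R, t • h = x := by
  constructor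
  · intro hx
    obtain ⟨u, hu⟩ := hi
    refine ⟨↑u⁻¹ * x i, ?_⟩
    -- `(h ⨯₃ x) ⨯₃ eᵢ = hᵢ • x - xᵢ • h`
    have key := cross_cross_eq_smul_sub_smul h x (Pi.single i 1)
    rw [hx, dotProduct_single_one, dotProduct_single_one, ← hu] at key
    simp only [map_zero, LinearMap.zero_apply] at key
    rw [mul_smul, ← sub_eq_zero.mp key.symm, smul_smul, Units.inv_mul, one_smul]
  · rintro ⟨t, rfl⟩
    rw [map_smul, cross_self, smul_zero]

theorem card_cross_eq_zero_of_isUnit {h : Fin 3 → R} {i : Fin 3} (hi : IsUnit (h i)) :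
    Nat.card {x // h ⨯₃ x = 0} = Nat.card R := by
  let smulH : R → {x // h ⨯₃ x = 0} :=
    fun t => ⟨t • h, (cross_eq_zero_iff_exists_smul hi _).2 ⟨t, rfl⟩⟩
  refine (Nat.card_congr (Equiv.ofBijective smulH ⟨fun t t' htt' => ?_, fun ⟨x, hx⟩ => ?_⟩)).symm
  · exact hi.mul_left_injective (congrFun (congrArg Subtype.val htt') i)
  · obtain ⟨t, rfl⟩ := (cross_eq_zero_iff_exists_smul hi x).1 hx
    exact ⟨t, rfl⟩

theorem cross_eq_zero_iff_fst_snd (u v : Fin 3 → R × S) :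
    u ⨯₃ v = 0 ↔ (Prod.fst ∘ u) ⨯₃ (Prod.fst ∘ v) = 0 ∧ (Prod.snd ∘ u) ⨯₃ (Prod.snd ∘ v) = 0 := by
  rw [← RingHom.coe_fst, ← RingHom.coe_snd, ← RingHom.map_cross, ← RingHom.map_cross]
  simp only [funext_iff, Prod.ext_iff]
  simp [forall_and]

abbrev CrossZeroPairs (R : Type*) [CommRing R] :=
  {v : (Fin 3 → R) × (Fin 3 → R) // v.1 ⨯₃ v.2 = 0}

def CrossZeroPairs.congr (e : R ≃+* S) : CrossZeroPairs R ≃ CrossZeroPairs S :=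
  let eV := Equiv.piCongrRight fun _ : Fin 3 => e.toEquiv
  (eV.prodCongr eV).subtypeEquiv fun v => by
    change _ ↔ (e.toRingHom ∘ v.1) ⨯₃ (e.toRingHom ∘ v.2) = 0
    rw [← RingHom.map_cross, funext_iff, funext_iff]
    simp

def CrossZeroPairs.prodEquiv : CrossZeroPairs (R × S) ≃ CrossZeroPairs R × CrossZeroPairs S :=
  let eV := Equiv.arrowProdEquivProdArrow (Fin 3) (fun _ => R) (fun _ => S)
  (((eV.prodCongr eV).trans (Equiv.prodProdProdComm _ _ _ _)).subtypeEquiv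
    fun v => cross_eq_zero_iff_fst_snd v.1 v.2).trans Equiv.subtypeProdEquivProd

theorem card_crossZeroPairs_eq_sum [Fintype R] :
    Nat.card (CrossZeroPairs R) = ∑ h : Fin 3 → R, Nat.card {x // h ⨯₃ x = 0} :=
  Nat.card_subtype_prod_eq_sum fun h x => h ⨯₃ x = 0

theorem card_smul_cross_eq_zero [Fintype R] [Fintype S] {a : R} (φ : R →+* S)
    (hφ : Function.Surjective φ) (ha : ∀ c, a * c = 0 ↔ φ c = 0) :
    Fintype.card S ^ 6 * Nat.card {v : (Fin 3 → R) × (Fin 3 → R) // a • (v.1 ⨯₃ v.2) = 0} =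
      Fintype.card R ^ 6 * Nat.card (CrossZeroPairs S) := by
  let φ₃ := φ.toAddMonoidHom.compLeft (Fin 3)
  let Φ := φ₃.prodMap φ₃
  have hΦ : Function.Surjective Φ := hφ.comp_left.prodMap hφ.comp_left
  have hcard := Φ.sum_comp_of_surjective hΦ fun _ => (1 : ℕ)
  simp only [sum_const, card_univ, Fintype.card_prod, Fintype.card_fun, Fintype.card_fin,
    smul_eq_mul, mul_one] at hcard
  have hfibre : Nat.card {v : (Fin 3 → R) × (Fin 3 → R) // a • (v.1 ⨯₃ v.2) = 0} =
      Nat.card Φ.ker * Nat.card (CrossZeroPairs S) := by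
    simp_rw [smul_cross_eq_zero_iff φ ha]
    exact Φ.card_subtype_comp_of_surjective hΦ fun w => w.1 ⨯₃ w.2 = 0
  rw [hfibre, show 6 = 3 + 3 from rfl, pow_add, pow_add, hcard]
  ring

end Cross

theorem card_crossZeroPairs_zmod_one : Nat.card (CrossZeroPairs (ZMod 1)) = 1 :=
  Nat.card_eq_one_iff_unique.mpr ⟨inferInstance, ⟨⟨0, by simp⟩⟩⟩

theorem card_crossZeroPairs_zmod_mul {a b : ℕ} (hab : a.Coprime b) :
    Nat.card (CrossZeroPairs (ZMod (a * b))) =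
      Nat.card (CrossZeroPairs (ZMod a)) * Nat.card (CrossZeroPairs (ZMod b)) := by
  rw [Nat.card_congr (CrossZeroPairs.congr (ZMod.chineseRemainder hab)),
    Nat.card_congr CrossZeroPairs.prodEquiv, Nat.card_prod]

theorem Int.natCast_dvd_mul_iff_of_mul_gcd_eq {m f : ℕ} {q n : ℤ} (hm : m ≠ 0)
    (hf : f * q.gcd m = m) : (m : ℤ) ∣ q * n ↔ (f : ℤ) ∣ n := by
  obtain ⟨q', hq⟩ := Int.gcd_dvd_left q m
  set g := q.gcd m
  have hg_pos : 0 < g := Int.gcd_pos_of_ne_zero_right _ (by exact_mod_cast hm)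
  have hg : (g : ℤ) ≠ 0 := by exact_mod_cast hg_pos.ne'
  have hcop : IsCoprime (f : ℤ) q' := by
    have hq' : q / g = q' := by rw [hq, Int.mul_ediv_cancel_left _ hg]
    have hf' : (m : ℤ) / g = f := by rw [← hf, Nat.cast_mul, Int.mul_ediv_cancel _ hg]
    have := Int.gcd_div_gcd_div_gcd hg_pos
    rwa [hq', hf', ← Int.isCoprime_iff_gcd_eq_one, isCoprime_comm] at this
  calc (m : ℤ) ∣ q * n ↔ (g : ℤ) * f ∣ (g : ℤ) * (q' * n) := by
        rw [← hf, hq]; push_cast; ring_nf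
    _ ↔ (f : ℤ) ∣ q' * n := mul_dvd_mul_iff_left hg
    _ ↔ (f : ℤ) ∣ n := ⟨hcop.dvd_of_dvd_mul_left, fun h => h.mul_left _⟩

namespace ZMod

theorem intCast_mul_eq_zero_iff {m f : ℕ} [NeZero m] {q : ℤ} (hf : f * q.gcd m = m)
    (c : ZMod m) : (q : ZMod m) * c = 0 ↔ castHom (Dvd.intro _ hf) (ZMod f) c = 0 := by
  have hc : (q : ZMod m) * c = ((q * c.val : ℤ) : ZMod m) := by
    push_cast
    rw [natCast_zmod_val]
  rw [hc, intCast_zmod_eq_zero_iff_dvd, castHom_apply, cast_eq_val, natCast_eq_zero_iff,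
    Int.natCast_dvd_mul_iff_of_mul_gcd_eq (NeZero.ne m) hf, Int.natCast_dvd_natCast]

theorem natCast_mul_eq_zero_iff_castHom {p : ℕ} [NeZero p] (k : ℕ) (c : ZMod (p ^ (k + 1))) :
    (p : ZMod (p ^ (k + 1))) * c = 0 ↔
      castHom (pow_dvd_pow p (k.le_add_right 1)) (ZMod (p ^ k)) c = 0 := by
  have hf : p ^ k * Int.gcd p (p ^ (k + 1) : ℕ) = p ^ (k + 1) := by
    rw [Int.gcd_natCast_natCast, Nat.gcd_eq_left (dvd_pow_self p k.succ_ne_zero), pow_succ]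
  exact_mod_cast intCast_mul_eq_zero_iff hf c

theorem exists_natCast_mul_eq_of_not_isUnit {p k : ℕ} [Fact p.Prime] {c : ZMod (p ^ (k + 1))}
    (hc : ¬IsUnit c) : ∃ y, (p : ZMod (p ^ (k + 1))) * y = c := by
  rw [← natCast_zmod_val c, isUnit_iff_coprime, Nat.coprime_pow_right_iff k.succ_pos,
    Nat.coprime_comm, (Fact.out : p.Prime).coprime_iff_not_dvd, not_not] at hc
  obtain ⟨j, hj⟩ := hc
  exact ⟨j, by rw [← Nat.cast_mul, ← hj, natCast_zmod_val]⟩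

theorem intCast_det_val {m n : ℕ} [NeZero m] (A : Matrix (Fin n) (Fin n) (ZMod m)) :
    (((Matrix.of fun i j => ((A i j).val : ℤ)).det : ℤ) : ZMod m) = A.det := by
  rw [← eq_intCast (Int.castRingHom (ZMod m)), RingHom.map_det]
  congr 1
  ext i j
  simp

end ZMod

section PrimePower

variable {p : ℕ} [Fact p.Prime] (k : ℕ)

theorem sum_comp_natCast_smul {M : Type*} [AddCommMonoid M]
    (F : (Fin 3 → ZMod (p ^ (k + 1))) → M) :
    ∑ h, F ((p : ZMod (p ^ (k + 1))) • h) =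
      p ^ 3 • ∑ h ∈ univ.filter (fun h => ∃ y, (p : ZMod (p ^ (k + 1))) • y = h), F h := by
  classical
  let π := ZMod.castHom (pow_dvd_pow p (k.le_add_right 1)) (ZMod (p ^ k))
  let π₃ := π.toAddMonoidHom.compLeft (Fin 3)
  let μ := DistribSMul.toAddMonoidHom (Fin 3 → ZMod (p ^ (k + 1))) (p : ZMod (p ^ (k + 1)))
  have hker : Nat.card μ.ker = p ^ 3 := by
    have hμπ : μ.ker = π₃.ker := by
      ext h
      simp [μ, π₃, π, funext_iff, ZMod.natCast_mul_eq_zero_iff_castHom]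
    have hπ : Function.Surjective π := ZMod.castHom_surjective _
    have hcard := π₃.sum_comp_of_surjective hπ.comp_left fun _ => 1
    simp only [sum_const, card_univ, Fintype.card_fun, ZMod.card, Fintype.card_fin, smul_eq_mul,
      mul_one] at hcard
    rw [hμπ]
    exact Nat.eq_of_mul_eq_mul_right (pow_pos (pow_pos (Fact.out : p.Prime).pos k) 3)
      (hcard.symm.trans (by ring))
  rw [← hker, ← μ.ker_rangeRestrict, sum_subtype (p := (· ∈ μ.range)) _ (fun _ => by simp [μ]) F]
  exact μ.rangeRestrict.sum_comp_of_surjective μ.rangeRestrict_surjective fun h => F h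

theorem sum_card_natCast_smul_cross_eq_zero :
    ∑ h : Fin 3 → ZMod (p ^ (k + 1)), Nat.card {x // ((p : ZMod (p ^ (k + 1))) • h) ⨯₃ x = 0} =
      p ^ 6 * Nat.card (CrossZeroPairs (ZMod (p ^ k))) := by
  simp_rw [map_smul, LinearMap.smul_apply]
  rw [← Nat.card_subtype_prod_eq_sum fun h x => (p : ZMod (p ^ (k + 1))) • (h ⨯₃ x) = 0]
  have hcount := card_smul_cross_eq_zero _ (ZMod.castHom_surjective _)
    (ZMod.natCast_mul_eq_zero_iff_castHom (p := p) k)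
  rw [ZMod.card, ZMod.card] at hcount
  refine Nat.eq_of_mul_eq_mul_left (pow_pos (pow_pos (Fact.out : p.Prime).pos k) 6) ?_
  rw [hcount]
  ring

theorem card_crossZeroPairs_prime_pow_succ :
    Nat.card (CrossZeroPairs (ZMod (p ^ (k + 1)))) + p ^ (3 * k) * p ^ (k + 1) =
      p ^ 3 * Nat.card (CrossZeroPairs (ZMod (p ^ k))) + p ^ (3 * (k + 1)) * p ^ (k + 1) := by
  classical
  set P := fun h : Fin 3 → ZMod (p ^ (k + 1)) => ∃ y, (p : ZMod (p ^ (k + 1))) • y = h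
  set S := univ.filter P
  have hp3 : 0 < p ^ 3 := pow_pos (Fact.out : p.Prime).pos 3
  have hcardS : #S = p ^ (3 * k) := by
    have hcard := sum_comp_natCast_smul (p := p) k fun _ => 1
    simp only [sum_const, card_univ, Fintype.card_fun, ZMod.card, Fintype.card_fin, smul_eq_mul,
      mul_one] at hcard
    exact Nat.eq_of_mul_eq_mul_left hp3 (by rw [← hcard]; ring)
  have hsumS : ∑ h ∈ S, Nat.card {x // h ⨯₃ x = 0} =
      p ^ 3 * Nat.card (CrossZeroPairs (ZMod (p ^ k))) := by
    have hsum := sum_comp_natCast_smul (p := p) k fun h => Nat.card {x // h ⨯₃ x = 0}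
    rw [sum_card_natCast_smul_cross_eq_zero, smul_eq_mul] at hsum
    exact Nat.eq_of_mul_eq_mul_left hp3 (hsum.symm.trans (by ring))
  have hcard_not_mem (h : Fin 3 → ZMod (p ^ (k + 1))) (hh : h ∉ S) :
      Nat.card {x // h ⨯₃ x = 0} = p ^ (k + 1) := by
    obtain ⟨i, hi⟩ : ∃ i, IsUnit (h i) := by
      by_contra! hnu
      choose y hy using fun i => ZMod.exists_natCast_mul_eq_of_not_isUnit (hnu i)
      exact hh (mem_filter.mpr ⟨mem_univ _, y, funext hy⟩)
    rw [card_cross_eq_zero_of_isUnit hi, Nat.card_zmod]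
  have hsplit := card_filter_add_card_filter_not (s := univ) (p := P)
  rw [card_univ, Fintype.card_fun, ZMod.card, Fintype.card_fin] at hsplit
  rw [card_crossZeroPairs_eq_sum, ← sum_filter_add_sum_filter_not univ P, hsumS,
    sum_congr rfl fun h hh => hcard_not_mem h (by simpa [S] using (mem_filter.mp hh).2), sum_const,
    smul_eq_mul, ← hcardS, pow_mul', ← hsplit]
  ring

theorem card_crossZeroPairs_prime_pow :
    (Nat.card (CrossZeroPairs (ZMod (p ^ k))) : ℂ) =
      (p : ℂ) ^ (3 * k) * (((p : ℂ) ^ k - 1) * (1 + (p : ℂ)⁻¹ + ((p : ℂ) ^ 2)⁻¹) + 1) := by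
  have hp : (p : ℂ) ≠ 0 := Nat.cast_ne_zero.mpr (Fact.out : p.Prime).ne_zero
  induction k with
  | zero =>
    simp only [pow_zero, mul_zero, sub_self, zero_mul, zero_add, mul_one]
    exact_mod_cast card_crossZeroPairs_zmod_one
  | succ k ih =>
    have hrec := congrArg (Nat.cast : ℕ → ℂ) (card_crossZeroPairs_prime_pow_succ k (p := p))
    push_cast at hrec
    rw [ih] at hrec
    rw [eq_sub_of_add_eq hrec]
    field_simp
    ring

end PrimePower

theorem card_crossZeroPairs_zmod (f : ℕ) [NeZero f] :
    (Nat.card (CrossZeroPairs (ZMod f)) : ℂ) = (f : ℂ) ^ 3 * ∏ p ∈ f.primeFactors,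
      (((p : ℂ) ^ f.factorization p - 1) * (1 + (p : ℂ)⁻¹ + ((p : ℂ) ^ 2)⁻¹) + 1) := by
  have hmul := Nat.multiplicative_factorization (fun n => Nat.card (CrossZeroPairs (ZMod n)))
    (fun _ _ => card_crossZeroPairs_zmod_mul) card_crossZeroPairs_zmod_one (NeZero.ne f)
  rw [hmul, Nat.prod_factorization_eq_prod_primeFactors, Nat.cast_prod]
  have hf : ∏ p ∈ f.primeFactors, (p : ℂ) ^ (3 * f.factorization p) = (f : ℂ) ^ 3 := by
    simp_rw [pow_mul', prod_pow]
    exact_mod_cast congrArg (· ^ 3) (Nat.prod_factorization_pow_eq_self (NeZero.ne f))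
  rw [← hf, ← prod_mul_distrib]
  refine prod_congr rfl fun p hp => ?_
  have : Fact p.Prime := ⟨Nat.prime_of_mem_primeFactors hp⟩
  exact card_crossZeroPairs_prime_pow _

theorem exp_det_val_eq_stdAddChar (m : ℕ) [NeZero m] (q : ℤ) (g h x : Fin 3 → ZMod m) :
    Complex.exp (2 * Real.pi * Complex.I * (q : ℂ) / (m : ℂ) *
        (((Matrix.of fun i j : Fin 3 =>
          ((((![g, h, x] : Fin 3 → Fin 3 → ZMod m) i j).val : ℤ))).det : ℂ))) =
      ZMod.stdAddChar (g ⬝ᵥ ((q : ZMod m) • (h ⨯₃ x))) := by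
  rw [dotProduct_smul, triple_product_eq_det, smul_eq_mul, ← ZMod.intCast_det_val ![g, h, x],
    ← Int.cast_mul, ZMod.stdAddChar_coe]
  congr 1
  push_cast
  ring

theorem sum_exp_det_val (m : ℕ) [NeZero m] (q : ℤ) :
    ∑ g : Fin 3 → ZMod m, ∑ h : Fin 3 → ZMod m, ∑ x : Fin 3 → ZMod m,
      Complex.exp (2 * Real.pi * Complex.I * (q : ℂ) / (m : ℂ) *
        (((Matrix.of fun i j : Fin 3 =>
          ((((![g, h, x] : Fin 3 → Fin 3 → ZMod m) i j).val : ℤ))).det : ℂ))) =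
      (m : ℂ) ^ 3 *
        Nat.card {v : (Fin 3 → ZMod m) × (Fin 3 → ZMod m) // (q : ZMod m) • (v.1 ⨯₃ v.2) = 0} := by
  simp_rw [exp_det_val_eq_stdAddChar]
  rw [sum_comm]
  conv_lhs => enter [2, h]; rw [sum_comm]
  simp_rw [AddChar.sum_apply_dotProduct (ZMod.isPrimitive_stdAddChar m), ZMod.card,
    Fintype.card_fin, Nat.card_subtype_prod_eq_sum fun h x => (q : ZMod m) • (h ⨯₃ x) = 0,
    Nat.card_eq_fintype_card, Fintype.card_subtype, card_filter, Nat.cast_sum, mul_sum]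
  push_cast
  simp_rw [mul_ite, mul_one, mul_zero]

theorem gsd_ZmZmZm_typeIII (m : ℕ) [NeZero m] (q : ℤ) :
    ((m : ℂ) ^ 3)⁻¹ *
        ∑ g : Fin 3 → ZMod m, ∑ h : Fin 3 → ZMod m, ∑ x : Fin 3 → ZMod m,
          Complex.exp (2 * Real.pi * Complex.I * (q : ℂ) / (m : ℂ) *
            (((Matrix.of fun i j : Fin 3 =>
                ((((![g, h, x] : Fin 3 → Fin 3 → ZMod m) i j).val : ℤ))).det : ℂ))) =
      ((m : ℂ) ^ 6 / ((m / Int.gcd q m : ℕ) : ℂ) ^ 3) *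
        ∏ p ∈ (m / Int.gcd q m).primeFactors,
          (((p : ℂ) ^ ((m / Int.gcd q m).factorization p) - 1) *
              (1 + (p : ℂ)⁻¹ + ((p : ℂ) ^ 2)⁻¹) + 1) := by
  set f := m / Int.gcd q m
  have hf : f * q.gcd m = m := Nat.div_mul_cancel (Int.gcd_dvd_natAbs_right q m)
  have : NeZero f := ⟨fun h => NeZero.ne m (by rw [← hf, h, zero_mul])⟩
  have hcount := congrArg (Nat.cast : ℕ → ℂ) <| card_smul_cross_eq_zero _
    (ZMod.castHom_surjective (Dvd.intro _ hf)) (ZMod.intCast_mul_eq_zero_iff hf)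
  push_cast [ZMod.card, card_crossZeroPairs_zmod] at hcount
  have hfC : (f : ℂ) ^ 3 ≠ 0 := pow_ne_zero 3 (Nat.cast_ne_zero.mpr (NeZero.ne f))
  have hmC : (m : ℂ) ^ 3 ≠ 0 := pow_ne_zero 3 (Nat.cast_ne_zero.mpr (NeZero.ne m))
  rw [sum_exp_det_val, inv_mul_cancel_left₀ hmC, div_mul_eq_mul_div, eq_div_iff hfC]
  refine mul_left_cancel₀ hfC ?_
  linear_combination hcount
end

section
/- Let m ≥ 1 be an odd integer and let D_m denote the dihedral group of order 2m. Consider the set of commuting pairs {(g,h) ∈ D_m × D_m : gh = hg}, with D_m acting on it by simultaneous conjugation x · (g,h) = (xgx⁻¹, xhx⁻¹). Then the number of orbits of this action equals (m² + 7)/2. (This is the ground state degeneracy on the torus of the twisted quantum double model with group D_m, for every 3-cocycle class in H³(D_m, U(1)).) -/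
/-!
For odd `m` a reflection commutes only with `1` and itself, and a nontrivial rotation only with
rotations. So a commuting pair either consists of two rotations `(r i, r j)`, whose class under
simultaneous conjugation is `{(i, j), (-i, -j)}`, or it is conjugate, by the rotation through half
the reflection's angle (`2` is invertible mod `m`), to exactly one of `(1, sr 0)`, `(sr 0, 1)`,
`(sr 0, sr 0)`. Burnside's lemma for negation on `(ℤ/m)²`, which fixes only `0`, gives
`(m² + 1) / 2` classes of rotation pairs, hence `(m² + 1) / 2 + 3 = (m² + 7) / 2` orbits.
-/

open MulAction

def Quot.equivOfNormalForm {α β : Sort*} {rel : α → α → Prop} (f : α → β) (nf : β → α)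
    (hf : ∀ a b, rel a b → f a = f b) (hf_nf : ∀ b, f (nf b) = b) (hnf : ∀ a, rel a (nf (f a))) :
    Quot rel ≃ β where
  toFun := Quot.lift f hf
  invFun b := Quot.mk rel (nf b)
  left_inv := Quot.ind fun a => (Quot.sound (hnf a)).symm
  right_inv := hf_nf

theorem two_mul_card_orbitRel_unitsInt {A : Type*} [AddCommGroup A] [Finite A]
    (h : ∀ a : A, -a = a → a = 0) :
    2 * Nat.card (orbitRel.Quotient ℤˣ A) = Nat.card A + 1 := by
  classical
  have := Fintype.ofFinite A
  have hneg : fixedBy A (-1 : ℤˣ) = {0} := by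
    ext a
    simp only [mem_fixedBy, Units.neg_smul, one_smul, Set.mem_singleton_iff]
    exact ⟨h a, fun ha => by simp [ha]⟩
  have burnside := sum_card_fixedBy_eq_card_orbits_mul_card_group ℤˣ A
  simp only [UnitsInt.univ, ← Nat.card_eq_fintype_card] at burnside
  rw [Finset.sum_pair (by decide), fixedBy_one_eq_univ, hneg] at burnside
  simp only [Nat.card_univ, Nat.card_unique] at burnside
  rw [burnside, Nat.card_eq_fintype_card (α := ℤˣ), Fintype.card_units_int, mul_comm]

namespace ZMod

variable {n : ℕ}

theorem exists_two_mul_eq (hn : Odd n) (c : ZMod n) : ∃ t : ZMod n, 2 * t = c := by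
  have : NeZero n := ⟨hn.pos.ne'⟩
  refine Finite.injective_iff_surjective.mp (fun s t hst => ?_) c
  rw [← sub_eq_zero, ← add_self_eq_zero_iff_eq_zero hn]
  linear_combination hst

theorem eq_zero_of_neg_eq_self (hn : Odd n) {v : ZMod n × ZMod n} (hv : -v = v) : v = 0 := by
  have component (a : ZMod n) (ha : -a = a) : a = 0 :=
    (add_self_eq_zero_iff_eq_zero hn).1 (neg_eq_iff_add_eq_zero.1 ha)
  exact Prod.ext (component _ (congrArg Prod.fst hv)) (component _ (congrArg Prod.snd hv))

end ZMod

namespace DihedralGroup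

variable {n : ℕ}

theorem r_conj_r (i j : ZMod n) : r i * r j * (r i)⁻¹ = r j := by
  simp [r_mul_r, inv_r]

theorem r_conj_sr (i j : ZMod n) : r i * sr j * (r i)⁻¹ = sr (j - 2 * i) := by
  simp only [r_mul_sr, sr_mul_r, inv_r]; ring_nf

theorem sr_conj_r (i j : ZMod n) : sr i * r j * (sr i)⁻¹ = r (-j) := by
  simp only [sr_mul_r, sr_mul_sr, inv_sr]; ring_nf

theorem sr_conj_sr (i j : ZMod n) : sr i * sr j * (sr i)⁻¹ = sr (2 * i - j) := by
  simp only [sr_mul_sr, r_mul_sr, inv_sr]; ring_nf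

theorem commute_r_sr_iff (hn : Odd n) {i j : ZMod n} : Commute (r i) (sr j) ↔ i = 0 := by
  rw [Commute, SemiconjBy, r_mul_sr, sr_mul_r, sr.injEq, ← ZMod.add_self_eq_zero_iff_eq_zero hn]
  constructor <;> intro h <;> linear_combination -h

theorem commute_sr_sr_iff (hn : Odd n) {i j : ZMod n} : Commute (sr i) (sr j) ↔ i = j := by
  rw [Commute, SemiconjBy, sr_mul_sr, sr_mul_sr, r.injEq, eq_comm (a := i),
    ← sub_eq_zero (a := j), ← ZMod.add_self_eq_zero_iff_eq_zero hn]
  constructor <;> intro h <;> linear_combination h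

/-- For odd `n` this is a complete invariant of commuting pairs up to simultaneous conjugation,
with `conjNormalForm` choosing a representative of each class. -/
def conjInvariant :
    DihedralGroup n × DihedralGroup n → orbitRel.Quotient ℤˣ (ZMod n × ZMod n) ⊕ Fin 3
  | (r i, r j) => .inl ⟦(i, j)⟧
  | (r _, sr _) => .inr 0
  | (sr _, r _) => .inr 1
  | (sr _, sr _) => .inr 2

theorem conjInvariant_conj (x g h : DihedralGroup n) :
    conjInvariant (x * g * x⁻¹, x * h * x⁻¹) = conjInvariant (g, h) := by
  rcases x with t | t <;> rcases g with i | i <;> rcases h with j | j <;>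
    simp only [conjInvariant, r_conj_r, r_conj_sr, sr_conj_r, sr_conj_sr]
  exact congrArg Sum.inl (Quotient.sound ⟨-1, by simp⟩)

noncomputable def conjNormalForm :
    orbitRel.Quotient ℤˣ (ZMod n × ZMod n) ⊕ Fin 3 → DihedralGroup n × DihedralGroup n
  | .inl v => (r v.out.1, r v.out.2)
  | .inr 0 => (r 0, sr 0)
  | .inr 1 => (sr 0, r 0)
  | .inr 2 => (sr 0, sr 0)

theorem commute_conjNormalForm (c : orbitRel.Quotient ℤˣ (ZMod n × ZMod n) ⊕ Fin 3) :
    Commute (conjNormalForm c).1 (conjNormalForm c).2 := by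
  rcases c with v | k
  · exact congrArg r (add_comm _ _)
  · fin_cases k <;> simp [conjNormalForm, r_zero]

theorem conjInvariant_conjNormalForm (c : orbitRel.Quotient ℤˣ (ZMod n × ZMod n) ⊕ Fin 3) :
    conjInvariant (conjNormalForm c) = c := by
  rcases c with v | k
  · exact congrArg Sum.inl v.out_eq
  · fin_cases k <;> rfl

theorem exists_conj_eq_conjNormalForm (hn : Odd n) {g h : DihedralGroup n} (hgh : Commute g h) :
    ∃ x, x * g * x⁻¹ = (conjNormalForm (conjInvariant (g, h))).1 ∧
      x * h * x⁻¹ = (conjNormalForm (conjInvariant (g, h))).2 := by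
  rcases g with i | i <;> rcases h with j | j
  · obtain ⟨u, hu⟩ := Quotient.mk_out (s := orbitRel ℤˣ (ZMod n × ZMod n)) (i, j)
    simp only [conjInvariant, conjNormalForm, ← hu]
    rcases Int.units_eq_one_or u with rfl | rfl
    · exact ⟨1, by simp⟩
    · exact ⟨sr 0, by simp⟩
  · obtain rfl := (commute_r_sr_iff hn).1 hgh
    obtain ⟨t, rfl⟩ := ZMod.exists_two_mul_eq hn j
    exact ⟨r t, by
      simp only [conjInvariant, conjNormalForm, r_conj_r, r_conj_sr, sub_self, and_self]⟩
  · obtain rfl := (commute_r_sr_iff hn).1 hgh.symm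
    obtain ⟨t, rfl⟩ := ZMod.exists_two_mul_eq hn i
    exact ⟨r t, by
      simp only [conjInvariant, conjNormalForm, r_conj_r, r_conj_sr, sub_self, and_self]⟩
  · obtain rfl := (commute_sr_sr_iff hn).1 hgh
    obtain ⟨t, rfl⟩ := ZMod.exists_two_mul_eq hn i
    exact ⟨r t, by simp only [conjInvariant, conjNormalForm, r_conj_sr, sub_self, and_self]⟩

end DihedralGroup

open DihedralGroup in
theorem gsd_dihedral_odd_general (m : ℕ) (hm : Odd m) :
    2 * Nat.card (Quot (fun p q :
        {p : DihedralGroup m × DihedralGroup m // p.1 * p.2 = p.2 * p.1} =>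
          ∃ x : DihedralGroup m,
            x * p.1.1 * x⁻¹ = q.1.1 ∧ x * p.1.2 * x⁻¹ = q.1.2)) =
      m ^ 2 + 7 := by
  have : NeZero m := ⟨hm.pos.ne'⟩
  refine (congrArg (2 * ·) (Nat.card_congr
    (β := orbitRel.Quotient ℤˣ (ZMod m × ZMod m) ⊕ Fin 3) ?orbits)).trans ?_
  · exact Quot.equivOfNormalForm (fun p => conjInvariant p.1)
      (fun c => ⟨conjNormalForm c, commute_conjNormalForm c⟩)
      (by rintro p ⟨⟨_, _⟩, _⟩ ⟨x, rfl, rfl⟩; exact (conjInvariant_conj x _ _).symm)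
      conjInvariant_conjNormalForm (fun p => exists_conj_eq_conjNormalForm hm p.2)
  rw [Nat.card_sum, Nat.card_fin, mul_add,
    two_mul_card_orbitRel_unitsInt fun _ => ZMod.eq_zero_of_neg_eq_self hm, Nat.card_prod,
    Nat.card_zmod]
  ring

theorem gsd_dihedral_odd (m : ℕ) (hm1 : 1 ≤ m) (hm : Odd m) :
    2 * Nat.card (Quot (fun p q :
        {p : DihedralGroup m × DihedralGroup m // p.1 * p.2 = p.2 * p.1} =>
          ∃ x : DihedralGroup m,
            x * p.1.1 * x⁻¹ = q.1.1 ∧ x * p.1.2 * x⁻¹ = q.1.2)) =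
      m ^ 2 + 7 :=
  gsd_dihedral_odd_general m hm
end
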